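/- arXiv:1309.3697 — 2 statements merged into one kernel-verified Lean document; each statement's English description precedes it below -/
import Mathlib

section
/- Let t ≥ 2 be a natural number and C₁, C₂ ≥ 0. Let T_j and T_⋆ be random variables with 0 ≤ T_j and 0 ≤ T_⋆ ≤ t almost surely, and suppose E[T_j] ≤ C₁·log t and E[t − T_⋆] ≤ C₂·log t. Then P( T_j ≥ T_⋆ ) ≤ 2(C₁ + C₂)·log t / t. -/
open MeasureTheory

/-! The event `T_j ≥ T_⋆` forces the nonnegative variable `T_j + (t - T_⋆)` to reach `t`, so
Markov's inequality bounds its probability by `(E[T_j] + E[t - T_⋆]) / t ≤ (C₁ + C₂) log t / t`.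
This is already half of the claimed bound. -/

section Markov

variable {Ω : Type*} [MeasurableSpace Ω] {μ : Measure Ω}

lemma measure_ge_le_ofReal_integral_div [IsFiniteMeasure μ] {X : Ω → ℝ}
    (hX : 0 ≤ᵐ[μ] X) (hXint : Integrable X μ) {a : ℝ} (ha : 0 < a) :
    μ {ω | a ≤ X ω} ≤ ENNReal.ofReal ((∫ ω, X ω ∂μ) / a) := by
  rw [← ENNReal.ofReal_toReal (measure_ne_top μ _)]
  refine ENNReal.ofReal_le_ofReal ((le_div_iff₀ ha).2 ?_)
  rw [mul_comm]
  exact mul_meas_ge_le_integral_of_nonneg hX hXint a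

lemma measure_le_le_ofReal_integral_add_div [IsFiniteMeasure μ] {S T : Ω → ℝ} {a : ℝ}
    (ha : 0 < a) (hSint : Integrable S μ) (hTint : Integrable T μ)
    (hS : ∀ᵐ ω ∂μ, 0 ≤ S ω) (hT : ∀ᵐ ω ∂μ, T ω ≤ a) :
    μ {ω | S ω ≥ T ω} ≤
      ENNReal.ofReal ((∫ ω, S ω ∂μ + ∫ ω, (a - T ω) ∂μ) / a) := by
  have hgap : Integrable (fun ω => a - T ω) μ := (integrable_const a).sub hTint
  have hsum_nonneg : 0 ≤ᵐ[μ] fun ω => S ω + (a - T ω) := by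
    filter_upwards [hS, hT] with ω hSω hTω
    simp only [Pi.zero_apply]
    linarith
  calc μ {ω | S ω ≥ T ω} ≤ μ {ω | a ≤ S ω + (a - T ω)} :=
        measure_mono fun ω (hω : T ω ≤ S ω) => show a ≤ S ω + (a - T ω) by linarith
    _ ≤ ENNReal.ofReal ((∫ ω, S ω + (a - T ω) ∂μ) / a) :=
        measure_ge_le_ofReal_integral_div hsum_nonneg (hSint.add hgap) ha
    _ = ENNReal.ofReal ((∫ ω, S ω ∂μ + ∫ ω, (a - T ω) ∂μ) / a) := by
        rw [integral_add hSint hgap]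

end Markov

theorem stmt_10_general
    {Ω : Type*} [MeasurableSpace Ω] (P : Measure Ω) [IsProbabilityMeasure P]
    (t : ℕ) (ht : 2 ≤ t) (C₁ C₂ : ℝ)
    (Tj Ts : Ω → ℝ)
    (hTjint : Integrable Tj P) (hTsint : Integrable Ts P)
    (hTjnn : ∀ᵐ ω ∂P, 0 ≤ Tj ω)
    (hTsle : ∀ᵐ ω ∂P, Ts ω ≤ t)
    (hETj : ∫ ω, Tj ω ∂P ≤ C₁ * Real.log t)
    (hETs : ∫ ω, ((t : ℝ) - Ts ω) ∂P ≤ C₂ * Real.log t) :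
    P {ω | Tj ω ≥ Ts ω} ≤ ENNReal.ofReal (2 * (C₁ + C₂) * Real.log t / t) := by
  have ht_pos : (0 : ℝ) < t := by positivity
  have hETj_nonneg : 0 ≤ ∫ ω, Tj ω ∂P := integral_nonneg_of_ae hTjnn
  have hETs_nonneg : 0 ≤ ∫ ω, ((t : ℝ) - Ts ω) ∂P :=
    integral_nonneg_of_ae (hTsle.mono fun ω h => sub_nonneg.2 h)
  refine (measure_le_le_ofReal_integral_add_div ht_pos hTjint hTsint hTjnn hTsle).trans ?_
  gcongr
  linarith

/-- If `0 ≤ T_j`, `0 ≤ T_⋆ ≤ t` a.s., `E[T_j] ≤ C₁ log t` and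
`E[t − T_⋆] ≤ C₂ log t`, then `P(T_j ≥ T_⋆) ≤ 2(C₁ + C₂) log t / t`. -/
theorem stmt_10
    {Ω : Type*} [MeasurableSpace Ω] (P : Measure Ω) [IsProbabilityMeasure P]
    (t : ℕ) (ht : 2 ≤ t) (C₁ C₂ : ℝ) (hC₁ : 0 ≤ C₁) (hC₂ : 0 ≤ C₂)
    (Tj Ts : Ω → ℝ)
    (hTjmeas : Measurable Tj) (hTsmeas : Measurable Ts)
    (hTjint : Integrable Tj P) (hTsint : Integrable Ts P)
    (hTjnn : ∀ᵐ ω ∂P, 0 ≤ Tj ω)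
    (hTsnn : ∀ᵐ ω ∂P, 0 ≤ Ts ω) (hTsle : ∀ᵐ ω ∂P, Ts ω ≤ t)
    (hETj : ∫ ω, Tj ω ∂P ≤ C₁ * Real.log t)
    (hETs : ∫ ω, ((t : ℝ) - Ts ω) ∂P ≤ C₂ * Real.log t) :
    P {ω | Tj ω ≥ Ts ω} ≤ ENNReal.ofReal (2 * (C₁ + C₂) * Real.log t / t) :=
  stmt_10_general P t ht C₁ C₂ Tj Ts hTjint hTsint hTjnn hTsle hETj hETs
end

section
/- Let Ω be a finite set with |Ω| = N, let 1 ≤ K < N, and let N_K ⊆ Ω with |N_K| = K. For each time step s = 1, …, t let a(s) be a random K-element subset of Ω, and set T_j(t) = #{ s ≤ t : j ∈ a(s) } for each j ∈ Ω. Fix t ≥ 2 and C ≥ 0, and assume E[T_j(t)] ≤ C·log t for every j ∉ N_K. Then P( ∃ j ∉ N_K, ∃ i ∈ N_K, T_j(t) ≥ T_i(t) ) ≤ 2·C·K·(N−K)·(N−K+1)·log t / t. In particular, the probability that the K options with the highest empirical choice counts T_j(t) are not exactly the set N_K is at most 2·C·K·(N−K)·(N−K+1)·log t / t. -/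
/-!
Since every step chooses exactly `K` options, the counts add up to `t K`. If a non-preferred
option `j` has been chosen at least as often as a preferred option `i`, then the preferred
options other than `i` account for at most `(K - 1) t` of these choices, so the non-preferred
options together were chosen at least `t / 2` times. By Markov's inequality this happens with
probability at most `2 E[∑_{j ∉ N_K} T_j(t)] / t ≤ 2 (N - K) C log t / t`, which is below the
claimed bound because `K (N - K + 1) ≥ 1`. A top-`K` set of counts different from `N_K`
exhibits such a pair `i`, `j`.
-/

open MeasureTheory

/-- The number of time steps `s < t` at which option `j` belongs to the chosen set `a s`. -/
def choiceCount {W Opt : Type*} [DecidableEq Opt] (a : ℕ → W → Finset Opt)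
    (t : ℕ) (j : Opt) (ω : W) : ℕ :=
  ((Finset.range t).filter (fun s => j ∈ a s ω)).card

section Counting

variable {α : Type*}

lemma le_two_mul_sum_compl_of_le [Fintype α] [DecidableEq α] {f : α → ℕ} {t : ℕ}
    {s : Finset α} (hf : ∀ k, f k ≤ t) (hsum : ∑ k, f k = t * s.card)
    {i j : α} (hi : i ∈ s) (hj : j ∉ s) (hij : f i ≤ f j) :
    t ≤ 2 * ∑ k ∈ sᶜ, f k := by
  set S := ∑ k ∈ sᶜ, f k
  have hjS : f j ≤ S := Finset.single_le_sum (fun k _ => Nat.zero_le (f k)) (Finset.mem_compl.2 hj)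
  have hrest : ∑ k ∈ s.erase i, f k ≤ (s.erase i).card * t :=
    Finset.sum_le_card_nsmul _ _ _ fun k _ => hf k
  have hsplit : f i + ∑ k ∈ s.erase i, f k + S = t * ((s.erase i).card + 1) := by
    rw [Finset.add_sum_erase s f hi, Finset.sum_add_sum_compl, hsum, Finset.card_erase_add_one hi]
  nlinarith

lemma exists_notMem_mem_le_of_ne {f : α → ℕ} {S s : Finset α} (hcard : S.card = s.card)
    (htop : ∀ i ∈ S, ∀ j ∉ S, f j ≤ f i) (hne : S ≠ s) :
    ∃ j ∉ s, ∃ i ∈ s, f i ≤ f j := by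
  obtain ⟨j, hjS, hjs⟩ :=
    Finset.not_subset.1 fun h => hne (Finset.eq_of_subset_of_card_le h hcard.ge)
  obtain ⟨i, his, hiS⟩ :=
    Finset.not_subset.1 fun h => hne (Finset.eq_of_subset_of_card_le h hcard.le).symm
  exact ⟨j, hjs, i, his, htop j hjS i hiS⟩

end Counting

section ChoiceCount

variable {Opt : Type*} [DecidableEq Opt] variable {W : Type*} (a : ℕ → W → Finset Opt)

lemma choiceCount_le (t : ℕ) (j : Opt) (ω : W) : choiceCount a t j ω ≤ t :=
  (Finset.card_filter_le _ _).trans_eq (Finset.card_range t)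

lemma sum_choiceCount [Fintype Opt] {K : ℕ} (hacard : ∀ s ω, (a s ω).card = K) (t : ℕ) (ω : W) :
    ∑ j, choiceCount a t j ω = t * K := by
  simp only [choiceCount, Finset.card_filter]
  rw [Finset.sum_comm]
  simp [Finset.sum_ite_mem, hacard]

variable [MeasurableSpace W] {a}

lemma measurable_choiceCount (t : ℕ) {j : Opt} (hameas : ∀ s, MeasurableSet {ω | j ∈ a s ω}) :
    Measurable fun ω => (choiceCount a t j ω : ℝ) := by
  simp only [choiceCount, Finset.card_filter, Nat.cast_sum, Nat.cast_ite, Nat.cast_one,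
    Nat.cast_zero]
  exact Finset.measurable_sum _ fun s _ => Measurable.ite (hameas s) measurable_const measurable_const

lemma integrable_choiceCount (P : Measure W) [IsFiniteMeasure P] (t : ℕ) {j : Opt}
    (hameas : ∀ s, MeasurableSet {ω | j ∈ a s ω}) :
    Integrable (fun ω => (choiceCount a t j ω : ℝ)) P := by
  refine Integrable.of_bound (measurable_choiceCount t hameas).aestronglyMeasurable (t : ℝ) ?_
  filter_upwards with ω
  rw [Real.norm_natCast]
  exact_mod_cast choiceCount_le a t j ω

end ChoiceCount

lemma measure_ge_le_ofReal_div {W : Type*} [MeasurableSpace W] {P : Measure W}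
    [IsFiniteMeasure P] {f : W → ℝ} (hf_nonneg : 0 ≤ f) (hf_int : Integrable f P)
    {ε B : ℝ} (hε : 0 < ε) (hB : ∫ ω, f ω ∂P ≤ B) :
    P {ω | ε ≤ f ω} ≤ ENNReal.ofReal (B / ε) := by
  rw [← ofReal_measureReal]
  refine ENNReal.ofReal_le_ofReal ((le_div_iff₀ hε).2 ?_)
  linarith [mul_meas_ge_le_integral_of_nonneg (ae_of_all P hf_nonneg) hf_int ε]

lemma div_half_le_of_one_le {M K C L t : ℝ} (hM : 0 ≤ M) (hK : 1 ≤ K) (hCL : 0 ≤ C * L)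
    (ht : 0 ≤ t) :
    M * (C * L) / (t / 2) ≤ 2 * C * K * M * (M + 1) * L / t := by
  rw [div_div_eq_mul_div]
  gcongr ?_ / _
  have hfactor : 1 ≤ K * (M + 1) := one_le_mul_of_one_le_of_one_le hK (by linarith)
  calc M * (C * L) * 2 ≤ M * (C * L) * 2 * (K * (M + 1)) :=
        le_mul_of_one_le_right (by positivity) hfactor
    _ = 2 * C * K * M * (M + 1) * L := by ring

/-- with `N` options, a preferred `K`-subset `N_K`, and random `K`-subsets
`a s` chosen at each step, if `E[T_j(t)] ≤ C log t` for every non-preferred option `j`,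
then the probability that some non-preferred option has been chosen at least as often as
some preferred option is at most `2·C·K·(N−K)·(N−K+1)·log t / t`; in particular the
probability that a top-`K` set of empirical counts differs from `N_K` obeys the same bound. -/
theorem stmt_11
    {W : Type*} [MeasurableSpace W] (P : Measure W) [IsProbabilityMeasure P]
    {Opt : Type*} [Fintype Opt] [DecidableEq Opt]
    (N K : ℕ) (hN : Fintype.card Opt = N) (hK : 1 ≤ K) (hKN : K < N)
    (NK : Finset Opt) (hNK : NK.card = K)
    (a : ℕ → W → Finset Opt)
    (hacard : ∀ s ω, (a s ω).card = K)
    (hameas : ∀ s j, MeasurableSet {ω | j ∈ a s ω})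
    (t : ℕ) (ht : 2 ≤ t) (C : ℝ) (hC : 0 ≤ C)
    (hE : ∀ j ∉ NK, ∫ ω, (choiceCount a t j ω : ℝ) ∂P ≤ C * Real.log t) :
    P {ω | ∃ j ∉ NK, ∃ i ∈ NK, choiceCount a t i ω ≤ choiceCount a t j ω}
        ≤ ENNReal.ofReal
            (2 * C * K * ((N : ℝ) - K) * ((N : ℝ) - K + 1) * Real.log t / t) ∧
      P {ω | ∃ S : Finset Opt, S.card = K ∧
              (∀ i ∈ S, ∀ j ∉ S, choiceCount a t j ω ≤ choiceCount a t i ω) ∧ S ≠ NK}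
        ≤ ENNReal.ofReal
            (2 * C * K * ((N : ℝ) - K) * ((N : ℝ) - K + 1) * Real.log t / t) := by
  set f : W → ℝ := fun ω => ∑ k ∈ NKᶜ, (choiceCount a t k ω : ℝ)
  have hint k : Integrable (fun ω => (choiceCount a t k ω : ℝ)) P :=
    integrable_choiceCount P t (hameas · k)
  have hevent : {ω | ∃ j ∉ NK, ∃ i ∈ NK, choiceCount a t i ω ≤ choiceCount a t j ω}
      ⊆ {ω | (t : ℝ) / 2 ≤ f ω} := by
    rintro ω ⟨j, hj, i, hi, hij⟩
    have hcount := le_two_mul_sum_compl_of_le (choiceCount_le a t · ω)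
      (hNK ▸ sum_choiceCount a hacard t ω) hi hj hij
    have hreal : (t : ℝ) ≤ 2 * f ω := by simp only [f, ← Nat.cast_sum]; exact_mod_cast hcount
    show (t : ℝ) / 2 ≤ f ω
    linarith
  have hmean : ∫ ω, f ω ∂P ≤ ((N : ℝ) - K) * (C * Real.log t) := by
    rw [integral_finsetSum _ fun k _ => hint k]
    refine (Finset.sum_le_card_nsmul _ _ _ fun k hk => hE k (Finset.mem_compl.1 hk)).trans_eq ?_
    rw [nsmul_eq_mul, Finset.card_compl, hNK, hN, Nat.cast_sub hKN.le]
  have hfirst := (measure_mono hevent).trans <|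
    (measure_ge_le_ofReal_div (fun ω => Finset.sum_nonneg fun k _ => Nat.cast_nonneg _)
      (integrable_finsetSum _ fun k _ => hint k) (half_pos (Nat.cast_pos.2 (by omega))) hmean).trans <|
    ENNReal.ofReal_le_ofReal <| div_half_le_of_one_le (sub_nonneg.2 (Nat.cast_le.2 hKN.le))
      (Nat.one_le_cast.2 hK) (mul_nonneg hC (Real.log_natCast_nonneg t)) t.cast_nonneg
  refine ⟨hfirst, (measure_mono ?_).trans hfirst⟩
  rintro ω ⟨S, hScard, htop, hne⟩
  exact exists_notMem_mem_le_of_ne (hScard.trans hNK.symm) htop hne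
end
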